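/- Let $\mathfrak{h}$ be the free non-commutative $\mathbb{Q}$-algebra on letters $z_1, z_2, \dots$, and define the harmonic product $\ast$ recursively by $1 \ast x = x \ast 1 = x$ and $(au) \ast (bv) = a(u \ast bv) + b(au \ast v) + (a \diamond b)(u \ast v)$, where $z_i \diamond z_j = z_{i+j}$. Define the interpolated product $\stackrel{t}{\ast}$ (with a central parameter $t$) by $1 \stackrel{t}{\ast} x = x \stackrel{t}{\ast} 1 = x$ and $(au) \stackrel{t}{\ast} (bv) = a(u \stackrel{t}{\ast} bv) + b(au \stackrel{t}{\ast} v) + (1-2t)(a \diamond b)(u \stackrel{t}{\ast} v) + (t^2 - t)\,(a \diamond b) \diamond (u \stackrel{t}{\ast} v)$ (where the last $\diamond$ contracts $a \diamond b$ into the first letter of each word of $u \stackrel{t}{\ast} v$, and is $0$ on the empty word). Let $S^t$ be the linear operator with $S^t(1)=1$, $S^t(au) = a S^t(u) + t\, a \diamond S^t(u)$. Then $S^t(x \stackrel{t}{\ast} y) = S^t(x) \ast S^t(y)$ for all $x, y \in \mathfrak{h}$. -/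

import Mathlib

open Polynomial

/- Words are lists over ℕ, the entry `a` encoding the letter `z_a`.
Coefficients are in `ℚ[t] = Polynomial ℚ`, with the interpolation parameter
`t = X` a central scalar. -/

/-- Prepend a letter to every word of a combination. -/
noncomputable def pre (a : ℕ) (x : List ℕ →₀ Polynomial ℚ) :
    List ℕ →₀ Polynomial ℚ :=
  Finsupp.mapDomain (a :: ·) x

/-- Contraction of a letter into the first letter of a word (`0` on the empty word). -/
noncomputable def diaWord (a : ℕ) : List ℕ → (List ℕ →₀ Polynomial ℚ)
  | [] => 0
  | b :: w => Finsupp.single ((a + b) :: w) 1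

/-- Linear extension of the contraction. -/
noncomputable def diaComb (a : ℕ) (x : List ℕ →₀ Polynomial ℚ) :
    List ℕ →₀ Polynomial ℚ :=
  x.sum fun w c => c • diaWord a w

/-- The harmonic (stuffle) product `∗` on words:
`(au) ∗ (bv) = a(u ∗ bv) + b(au ∗ v) + (a⋄b)(u ∗ v)`. -/
noncomputable def hstar : List ℕ → List ℕ → (List ℕ →₀ Polynomial ℚ)
  | [], y => Finsupp.single y 1
  | x, [] => Finsupp.single x 1
  | a :: u, b :: v =>
      pre a (hstar u (b :: v)) + pre b (hstar (a :: u) v)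
        + pre (a + b) (hstar u v)
  termination_by x y => x.length + y.length
  decreasing_by all_goals simp <;> omega

/-- The interpolated product `∗_t`:
`(au) ∗_t (bv) = a(u ∗_t bv) + b(au ∗_t v) + (1-2t)(a⋄b)(u ∗_t v)
  + (t²-t)(a⋄b) ⋄ (u ∗_t v)`. -/
noncomputable def tstar : List ℕ → List ℕ → (List ℕ →₀ Polynomial ℚ)
  | [], y => Finsupp.single y 1
  | x, [] => Finsupp.single x 1
  | a :: u, b :: v =>
      pre a (tstar u (b :: v)) + pre b (tstar (a :: u) v)
        + ((1 - 2 * X : Polynomial ℚ) • pre (a + b) (tstar u v))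
        + ((X ^ 2 - X : Polynomial ℚ) • diaComb (a + b) (tstar u v))
  termination_by x y => x.length + y.length
  decreasing_by all_goals simp <;> omega

/-- The operator `S^t` on words: `S^t(au) = a S^t(u) + t (a ⋄ S^t(u))`. -/
noncomputable def St : List ℕ → (List ℕ →₀ Polynomial ℚ)
  | [] => Finsupp.single [] 1
  | a :: u => pre a (St u) + ((X : Polynomial ℚ) • diaComb a (St u))

/-- Linear extension of `S^t`. -/
noncomputable def StL (x : List ℕ →₀ Polynomial ℚ) : List ℕ →₀ Polynomial ℚ :=
  x.sum fun w c => c • St w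

/-- Bilinear extension of the harmonic product. -/
noncomputable def hstarB (x y : List ℕ →₀ Polynomial ℚ) :
    List ℕ →₀ Polynomial ℚ :=
  x.sum fun u c => y.sum fun v d => (c * d) • hstar u v

/-- Bilinear extension of the interpolated product. -/
noncomputable def tstarB (x y : List ℕ →₀ Polynomial ℚ) :
    List ℕ →₀ Polynomial ℚ :=
  x.sum fun u c => y.sum fun v d => (c * d) • tstar u v

/-! The maps involved are linear (bilinear for the products), so every identity can be checked
on words. Write `T_a = a · + t (a ⋄ ·)`, so that `S^t(au) = T_a S^t(u)`. Expanding the harmonic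
recursion after one contraction gives `(a ⋄ U) ∗ (bV) = a ⋄ (U ∗ bV) + b((a ⋄ U) ∗ V) - (a ⋄ b)(U ∗ V)`
and its mirror and double-contraction variants; together with the recursion itself they yield
`T_a x ∗ T_b y = T_a(x ∗ T_b y) + T_b(T_a x ∗ y) + (1-2t) T_{a⋄b}(x ∗ y) + (t²-t) (a ⋄ b) ⋄ (x ∗ y)`
for all `x, y ∈ 𝔥`. Since `S^t` turns prefixing by `a` into `T_a` and commutes with `a ⋄ ·`, it maps
the recursion of `∗_t` onto exactly this identity, and induction on the total length concludes. -/

namespace Finsupp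

variable (R : Type*) {α β M : Type*} [CommSemiring R] [AddCommMonoid M] [Module R M]

noncomputable def linearCombination₂ (f : α → β → M) : (α →₀ R) →ₗ[R] (β →₀ R) →ₗ[R] M :=
  linearCombination R fun a => linearCombination R (f a)

variable {R}

@[simp]
theorem linearCombination₂_single (f : α → β → M) (a : α) (b : β) (c d : R) :
    linearCombination₂ R f (single a c) (single b d) = (c * d) • f a b := by
  simp [linearCombination₂, mul_smul, smul_comm c d]

theorem linearCombination₂_apply (f : α → β → M) (x : α →₀ R) (y : β →₀ R) :
    linearCombination₂ R f x y = x.sum fun a c => y.sum fun b d => (c * d) • f a b := by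
  simp only [linearCombination₂, linearCombination_apply, Finsupp.sum, LinearMap.sum_apply,
    LinearMap.smul_apply, Finset.smul_sum, mul_smul]

end Finsupp

open Finsupp

local notation "𝔥" => List ℕ →₀ ℚ[X]

noncomputable section

def lpre (a : ℕ) : 𝔥 →ₗ[ℚ[X]] 𝔥 := lmapDomain ℚ[X] ℚ[X] (a :: ·)

def ldia (a : ℕ) : 𝔥 →ₗ[ℚ[X]] 𝔥 := linearCombination ℚ[X] (diaWord a)

def tpre (a : ℕ) : 𝔥 →ₗ[ℚ[X]] 𝔥 := lpre a + (X : ℚ[X]) • ldia a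

def lSt : 𝔥 →ₗ[ℚ[X]] 𝔥 := linearCombination ℚ[X] St

def lhstar : 𝔥 →ₗ[ℚ[X]] 𝔥 →ₗ[ℚ[X]] 𝔥 := linearCombination₂ ℚ[X] hstar

def ltstar : 𝔥 →ₗ[ℚ[X]] 𝔥 →ₗ[ℚ[X]] 𝔥 := linearCombination₂ ℚ[X] tstar

end

theorem StL_eq_lSt (x : 𝔥) : StL x = lSt x := (linearCombination_apply ℚ[X] x).symm

theorem hstarB_eq_lhstar (x y : 𝔥) : hstarB x y = lhstar x y :=
  (linearCombination₂_apply hstar x y).symm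

theorem tstarB_eq_ltstar (x y : 𝔥) : tstarB x y = ltstar x y :=
  (linearCombination₂_apply tstar x y).symm

@[simp]
theorem lpre_single (a : ℕ) (w : List ℕ) (c : ℚ[X]) : lpre a (single w c) = single (a :: w) c :=
  mapDomain_single

@[simp]
theorem ldia_single_nil (a : ℕ) (c : ℚ[X]) : ldia a (single [] c) = 0 := by
  simp [ldia, diaWord]

@[simp]
theorem ldia_single_cons (a b : ℕ) (w : List ℕ) (c : ℚ[X]) :
    ldia a (single (b :: w) c) = single ((a + b) :: w) c := by
  simp [ldia, diaWord]

theorem ldia_lpre (a b : ℕ) (x : 𝔥) : ldia a (lpre b x) = lpre (a + b) x := by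
  induction x using induction_linear with
  | zero => simp
  | add x y hx hy => simp [hx, hy]
  | single w c => simp

theorem ldia_ldia (a b : ℕ) (x : 𝔥) : ldia a (ldia b x) = ldia (a + b) x := by
  induction x using induction_linear with
  | zero => simp
  | add x y hx hy => simp [hx, hy]
  | single w c => cases w with
    | nil => simp
    | cons d w => simp [add_assoc]

theorem hstar_nil_left (v : List ℕ) : hstar [] v = single v 1 := by rw [hstar]

theorem hstar_nil_right (u : List ℕ) : hstar u [] = single u 1 := by
  cases u <;> simp [hstar]

theorem hstar_cons_cons (a b : ℕ) (u v : List ℕ) :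
    hstar (a :: u) (b :: v) =
      lpre a (hstar u (b :: v)) + lpre b (hstar (a :: u) v) + lpre (a + b) (hstar u v) := by
  rw [hstar]; rfl

theorem hstar_comm (u v : List ℕ) : hstar u v = hstar v u :=
  match u, v with
  | [], v => by rw [hstar_nil_left, hstar_nil_right]
  | a :: u, [] => by rw [hstar_nil_left, hstar_nil_right]
  | a :: u, b :: v => by
      rw [hstar_cons_cons, hstar_cons_cons, hstar_comm u (b :: v), hstar_comm (a :: u) v,
        hstar_comm u v, add_comm a b]
      abel
termination_by u.length + v.length

@[simp]
theorem lhstar_single_single (u v : List ℕ) (c d : ℚ[X]) :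
    lhstar (single u c) (single v d) = (c * d) • hstar u v :=
  linearCombination₂_single hstar u v c d

theorem lhstar_comm (x y : 𝔥) : lhstar x y = lhstar y x := by
  suffices lhstar = lhstar.flip from LinearMap.congr_fun₂ this x y
  ext u v : 4
  simp [hstar_comm]

@[simp]
theorem lhstar_single_nil_left (y : 𝔥) : lhstar (single [] 1) y = y := by
  induction y using induction_linear with
  | zero => simp
  | add x y hx hy => simp [hx, hy]
  | single w c => simp [hstar_nil_left]

@[simp]
theorem lhstar_single_nil_right (x : 𝔥) : lhstar x (single [] 1) = x := by
  rw [lhstar_comm, lhstar_single_nil_left]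

theorem lhstar_lpre_lpre (a b : ℕ) (x y : 𝔥) :
    lhstar (lpre a x) (lpre b y) =
      lpre a (lhstar x (lpre b y)) + lpre b (lhstar (lpre a x) y) + lpre (a + b) (lhstar x y) := by
  suffices lhstar.compl₁₂ (lpre a) (lpre b) =
      (lhstar.compl₂ (lpre b)).compr₂ (lpre a) + (lhstar ∘ₗ lpre a).compr₂ (lpre b) +
        lhstar.compr₂ (lpre (a + b)) from LinearMap.congr_fun₂ this x y
  ext u v : 4
  simp [hstar_cons_cons]

theorem lhstar_ldia_lpre (a b : ℕ) (x y : 𝔥) :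
    lhstar (ldia a x) (lpre b y) =
      ldia a (lhstar x (lpre b y)) + lpre b (lhstar (ldia a x) y) - lpre (a + b) (lhstar x y) := by
  suffices lhstar.compl₁₂ (ldia a) (lpre b) + lhstar.compr₂ (lpre (a + b)) =
      (lhstar.compl₂ (lpre b)).compr₂ (ldia a) + (lhstar ∘ₗ ldia a).compr₂ (lpre b) from
    eq_sub_of_add_eq (LinearMap.congr_fun₂ this x y)
  ext u v : 4
  cases u with
  | nil => simp [hstar_nil_left]
  | cons e u =>
    simp only [LinearMap.coe_comp, Function.comp_apply, lsingle_apply, LinearMap.add_apply,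
      LinearMap.compl₁₂_apply, LinearMap.compl₂_apply, LinearMap.compr₂_apply, ldia_single_cons,
      lpre_single, lhstar_single_single, mul_one, one_smul, hstar_cons_cons, smul_add, map_add,
      ldia_lpre, add_assoc, add_right_inj]
    abel

theorem lhstar_lpre_ldia (a b : ℕ) (x y : 𝔥) :
    lhstar (lpre a x) (ldia b y) =
      lpre a (lhstar x (ldia b y)) + ldia b (lhstar (lpre a x) y) - lpre (a + b) (lhstar x y) := by
  rw [lhstar_comm, lhstar_ldia_lpre, lhstar_comm y, lhstar_comm y, lhstar_comm (ldia b y),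
    add_comm b a]
  abel

theorem lhstar_ldia_ldia (a b : ℕ) (x y : 𝔥) :
    lhstar (ldia a x) (ldia b y) =
      ldia a (lhstar x (ldia b y)) + ldia b (lhstar (ldia a x) y) - ldia (a + b) (lhstar x y) := by
  suffices lhstar.compl₁₂ (ldia a) (ldia b) + lhstar.compr₂ (ldia (a + b)) =
      (lhstar.compl₂ (ldia b)).compr₂ (ldia a) + (lhstar ∘ₗ ldia a).compr₂ (ldia b) from
    eq_sub_of_add_eq (LinearMap.congr_fun₂ this x y)
  ext u v : 4
  cases u with
  | nil => simp [hstar_nil_left, ldia_ldia]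
  | cons e u =>
    cases v with
    | nil => simp [add_assoc, add_left_comm b a]
    | cons f v =>
      simp only [LinearMap.coe_comp, Function.comp_apply, lsingle_apply, LinearMap.add_apply,
        LinearMap.compl₁₂_apply, LinearMap.compl₂_apply, LinearMap.compr₂_apply, ldia_single_cons,
        lhstar_single_single, mul_one, one_smul, hstar_cons_cons, smul_add, map_add, ldia_lpre,
        add_assoc, add_left_comm b a, add_left_comm e b, add_right_inj]
      abel

theorem lhstar_tpre_tpre (a b : ℕ) (x y : 𝔥) :
    lhstar (tpre a x) (tpre b y) =
      tpre a (lhstar x (tpre b y)) + tpre b (lhstar (tpre a x) y)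
        + (1 - 2 * X : ℚ[X]) • tpre (a + b) (lhstar x y)
        + (X ^ 2 - X : ℚ[X]) • ldia (a + b) (lhstar x y) := by
  simp only [tpre, LinearMap.add_apply, LinearMap.smul_apply, map_add, map_smul, lhstar_lpre_lpre, lhstar_ldia_lpre,
    lhstar_lpre_ldia, lhstar_ldia_ldia]
  module

theorem ldia_tpre (a b : ℕ) (x : 𝔥) : ldia a (tpre b x) = tpre (a + b) x := by
  simp [tpre, ldia_lpre, ldia_ldia]

theorem St_nil : St [] = single [] 1 := by rw [St]

theorem St_cons (a : ℕ) (u : List ℕ) : St (a :: u) = tpre a (St u) := by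
  rw [St]; rfl

@[simp]
theorem lSt_single (w : List ℕ) (c : ℚ[X]) : lSt (single w c) = c • St w := by
  simp [lSt]

theorem lSt_lpre (a : ℕ) (x : 𝔥) : lSt (lpre a x) = tpre a (lSt x) := by
  suffices lSt ∘ₗ lpre a = tpre a ∘ₗ lSt from LinearMap.congr_fun this x
  ext w : 2
  simp [St_cons]

theorem lSt_ldia (a : ℕ) (x : 𝔥) : lSt (ldia a x) = ldia a (lSt x) := by
  suffices lSt ∘ₗ ldia a = ldia a ∘ₗ lSt from LinearMap.congr_fun this x
  ext w : 2
  cases w with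
  | nil => simp [St_nil]
  | cons b w => simp [St_cons, ldia_tpre]

theorem tstar_nil_left (v : List ℕ) : tstar [] v = single v 1 := by rw [tstar]

theorem tstar_nil_right (u : List ℕ) : tstar u [] = single u 1 := by
  cases u <;> simp [tstar]

theorem tstar_cons_cons (a b : ℕ) (u v : List ℕ) :
    tstar (a :: u) (b :: v) =
      lpre a (tstar u (b :: v)) + lpre b (tstar (a :: u) v)
        + (1 - 2 * X : ℚ[X]) • lpre (a + b) (tstar u v)
        + (X ^ 2 - X : ℚ[X]) • ldia (a + b) (tstar u v) := by
  rw [tstar]; rfl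

theorem lSt_tstar (u v : List ℕ) : lSt (tstar u v) = lhstar (St u) (St v) :=
  match u, v with
  | [], v => by simp [tstar_nil_left, St_nil]
  | a :: u, [] => by simp [tstar_nil_right, St_nil]
  | a :: u, b :: v => by
      rw [tstar_cons_cons, map_add, map_add, map_add, map_smul, map_smul, lSt_lpre, lSt_lpre,
        lSt_lpre, lSt_ldia, lSt_tstar u (b :: v), lSt_tstar (a :: u) v, lSt_tstar u v,
        St_cons a u, St_cons b v, lhstar_tpre_tpre]
termination_by u.length + v.length

/-- `S^t` intertwines the interpolated product with the harmonic product: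
`S^t(x ∗_t y) = S^t(x) ∗ S^t(y)` for all `x, y ∈ 𝔥`. -/
theorem St_tstar_eq_hstar (x y : List ℕ →₀ Polynomial ℚ) :
    StL (tstarB x y) = hstarB (StL x) (StL y) := by
  rw [tstarB_eq_ltstar, hstarB_eq_lhstar, StL_eq_lSt, StL_eq_lSt, StL_eq_lSt]
  suffices ltstar.compr₂ lSt = lhstar.compl₁₂ lSt lSt from LinearMap.congr_fun₂ this x y
  ext u v : 4
  simpa [ltstar] using lSt_tstar u v
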